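/- Suppose symmetric matrices P, T ∈ ℝ^{n×n}, K ∈ ℝ^{m×n}, positive definite Q ∈ ℝ^{n×n}, R ∈ ℝ^{m×m}, and γ > 0 satisfy 0 ≺ P ≺ T ≺ γ²I and P ⪰ Q + KᵀRK + (A − BK)ᵀ(P⁻¹ − γ⁻²I)⁻¹(A − BK). Then for all x ∈ ℝ^n and all w ∈ ℝ^n: |x|²_Q + |Kx|²_R − γ²|w|² + |(A − BK)x + w|²_P ≤ |x|²_P, i.e., the closed-loop H∞ dissipation inequality holds for the control u = −Kx applied to x⁺ = Ax + Bu + w. -/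

import Mathlib

/-!
With `M = γ²I - P ≻ 0` (since `P ≺ T ≺ γ²I`) one has `(P⁻¹ - γ⁻²I)⁻¹ = P + P M⁻¹ P`,
and completing the square in `w` gives
`|y + w|²_P - γ²|w|² = |y|²_{P + P M⁻¹ P} - |w - M⁻¹ P y|²_M ≤ yᵀ (P⁻¹ - γ⁻²I)⁻¹ y`.
Applied to `y = (A - BK)x`, the Riccati inequality tested against `x` finishes the proof.
-/

open Matrix

namespace Matrix

variable {ι κ R : Type*} [Fintype ι]

theorem dotProduct_transpose_mul_mul_mulVec [CommSemiring R] [Fintype κ] (C : Matrix κ ι R)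
    (S : Matrix κ κ R) (x : ι → R) :
    x ⬝ᵥ ((Cᵀ * S * C) *ᵥ x) = (C *ᵥ x) ⬝ᵥ (S *ᵥ (C *ᵥ x)) := by
  rw [← mulVec_mulVec, ← mulVec_mulVec, dotProduct_transpose_mulVec, dotProduct_comm]

theorem inv_sub_inv_smul_one [DecidableEq ι] [Field R] {P : Matrix ι ι R} {c : R} (hc : c ≠ 0)
    (hP : IsUnit P.det) (hM : IsUnit (c • 1 - P).det) :
    (P⁻¹ - c⁻¹ • 1)⁻¹ = P + P * (c • 1 - P)⁻¹ * P := by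
  have hcP : 1 - c⁻¹ • P = c⁻¹ • (c • 1 - P) := by
    rw [smul_sub, smul_smul, inv_mul_cancel₀ hc, one_smul]
  apply inv_eq_right_inv
  calc (P⁻¹ - c⁻¹ • 1) * (P + P * (c • 1 - P)⁻¹ * P)
      = 1 - c⁻¹ • P + (1 - c⁻¹ • P) * ((c • 1 - P)⁻¹ * P) := by
        simp only [Matrix.sub_mul, Matrix.mul_add, Matrix.smul_mul, Matrix.one_mul,
          ← Matrix.mul_assoc, nonsing_inv_mul P hP]
    _ = 1 := by
        rw [hcP, smul_mul_assoc, ← Matrix.mul_assoc, mul_nonsing_inv _ hM, Matrix.one_mul,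
          ← hcP, sub_add_cancel]

theorem IsSymm.dotProduct_mulVec_comm [CommSemiring R] {A : Matrix ι ι R} (hA : A.IsSymm)
    (x y : ι → R) : x ⬝ᵥ (A *ᵥ y) = y ⬝ᵥ (A *ᵥ x) := by
  simpa only [hA.eq] using dotProduct_transpose_mulVec A x y

theorem dotProduct_mulVec_add_sub_smul_add_eq [DecidableEq ι] [CommRing R] {P : Matrix ι ι R}
    (hP : P.IsSymm) {c : R} (hM : IsUnit (c • 1 - P).det) (y w : ι → R) :
    (y + w) ⬝ᵥ (P *ᵥ (y + w)) - c * (w ⬝ᵥ w) +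
        (w - (c • 1 - P)⁻¹ *ᵥ P *ᵥ y) ⬝ᵥ ((c • 1 - P) *ᵥ (w - (c • 1 - P)⁻¹ *ᵥ P *ᵥ y)) =
      y ⬝ᵥ ((P + P * (c • 1 - P)⁻¹ * P) *ᵥ y) := by
  set M := c • 1 - P
  set z := M⁻¹ *ᵥ P *ᵥ y
  have hMz : M *ᵥ z = P *ᵥ y := by rw [mulVec_mulVec, mul_nonsing_inv _ hM, one_mulVec]
  have hMsymm : M.IsSymm := (isSymm_one.smul c).sub hP
  have hzM : z ⬝ᵥ (M *ᵥ w) = w ⬝ᵥ (P *ᵥ y) := by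
    rw [hMsymm.dotProduct_mulVec_comm, hMz]
  have hwM : w ⬝ᵥ (M *ᵥ w) = c * (w ⬝ᵥ w) - w ⬝ᵥ (P *ᵥ w) := by
    rw [sub_mulVec, smul_mulVec, one_mulVec, dotProduct_sub, dotProduct_smul, smul_eq_mul]
  have hPyw : y ⬝ᵥ (P *ᵥ w) = w ⬝ᵥ (P *ᵥ y) := hP.dotProduct_mulVec_comm y w
  have hPzy : z ⬝ᵥ (P *ᵥ y) = y ⬝ᵥ (P *ᵥ z) := hP.dotProduct_mulVec_comm z y
  simp only [mulVec_add, mulVec_sub, dotProduct_add, dotProduct_sub, add_dotProduct,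
    sub_dotProduct, add_mulVec, ← mulVec_mulVec, hMz, hzM, hwM, hPyw, hPzy]
  ring

theorem dotProduct_mulVec_add_sub_smul_le [DecidableEq ι] {P : Matrix ι ι ℝ} {c : ℝ}
    (hc : c ≠ 0) (hP : IsUnit P.det) (hM : (c • 1 - P).PosDef) (y w : ι → ℝ) :
    (y + w) ⬝ᵥ (P *ᵥ (y + w)) - c * (w ⬝ᵥ w) ≤ y ⬝ᵥ ((P⁻¹ - c⁻¹ • 1)⁻¹ *ᵥ y) := by
  have hPsymm : P.IsSymm := by
    simpa using (isSymm_one.smul c).sub (isHermitian_iff_isSymm.mp hM.isHermitian)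
  have hsq := hM.posSemidef.dotProduct_mulVec_nonneg (w - (c • 1 - P)⁻¹ *ᵥ P *ᵥ y)
  rw [star_trivial] at hsq
  rw [inv_sub_inv_smul_one hc hP hM.det_pos.ne'.isUnit,
    ← dotProduct_mulVec_add_sub_smul_add_eq hPsymm hM.det_pos.ne'.isUnit]
  exact le_add_of_nonneg_right hsq

end Matrix

theorem stmt9_general (n m : ℕ) (γ : ℝ) (hγ : 0 < γ)
    (A : Matrix (Fin n) (Fin n) ℝ) (B : Matrix (Fin n) (Fin m) ℝ)
    (K : Matrix (Fin m) (Fin n) ℝ)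
    (P T : Matrix (Fin n) (Fin n) ℝ)
    (Q : Matrix (Fin n) (Fin n) ℝ) (R : Matrix (Fin m) (Fin m) ℝ)
    (hP : P.PosDef) (hPT : (T - P).PosDef)
    (hTγ : (γ ^ 2 • (1 : Matrix (Fin n) (Fin n) ℝ) - T).PosDef)
    (hRic : (P - (Q + Kᵀ * R * K +
        (A - B * K)ᵀ *
          (P⁻¹ - (γ ^ 2)⁻¹ • (1 : Matrix (Fin n) (Fin n) ℝ))⁻¹ *
          (A - B * K))).PosSemidef) :
    ∀ (x w : Fin n → ℝ),
      x ⬝ᵥ (Q *ᵥ x) + (K *ᵥ x) ⬝ᵥ (R *ᵥ (K *ᵥ x)) - γ ^ 2 * (w ⬝ᵥ w) +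
          ((A - B * K) *ᵥ x + w) ⬝ᵥ (P *ᵥ ((A - B * K) *ᵥ x + w))
        ≤ x ⬝ᵥ (P *ᵥ x) := by
  intro x w
  have hM : (γ ^ 2 • (1 : Matrix (Fin n) (Fin n) ℝ) - P).PosDef := by
    simpa only [sub_add_sub_cancel] using hTγ.add hPT
  have hgain := dotProduct_mulVec_add_sub_smul_le (pow_ne_zero 2 hγ.ne') hP.det_pos.ne'.isUnit
    hM ((A - B * K) *ᵥ x) w
  have hric := hRic.dotProduct_mulVec_nonneg x
  rw [star_trivial, sub_mulVec, add_mulVec, add_mulVec, dotProduct_sub, dotProduct_add,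
    dotProduct_add, dotProduct_transpose_mul_mul_mulVec,
    dotProduct_transpose_mul_mul_mulVec] at hric
  linarith

theorem stmt9 (n m : ℕ) (γ : ℝ) (hγ : 0 < γ)
    (A : Matrix (Fin n) (Fin n) ℝ) (B : Matrix (Fin n) (Fin m) ℝ)
    (K : Matrix (Fin m) (Fin n) ℝ)
    (P T : Matrix (Fin n) (Fin n) ℝ)
    (Q : Matrix (Fin n) (Fin n) ℝ) (R : Matrix (Fin m) (Fin m) ℝ)
    (hQ : Q.PosDef) (hR : R.PosDef)
    (hP : P.PosDef) (hPT : (T - P).PosDef)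
    (hTγ : (γ ^ 2 • (1 : Matrix (Fin n) (Fin n) ℝ) - T).PosDef)
    (hRic : (P - (Q + Kᵀ * R * K +
        (A - B * K)ᵀ *
          (P⁻¹ - (γ ^ 2)⁻¹ • (1 : Matrix (Fin n) (Fin n) ℝ))⁻¹ *
          (A - B * K))).PosSemidef) :
    ∀ (x w : Fin n → ℝ),
      x ⬝ᵥ (Q *ᵥ x) + (K *ᵥ x) ⬝ᵥ (R *ᵥ (K *ᵥ x)) - γ ^ 2 * (w ⬝ᵥ w) +
          ((A - B * K) *ᵥ x + w) ⬝ᵥ (P *ᵥ ((A - B * K) *ᵥ x + w))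
        ≤ x ⬝ᵥ (P *ᵥ x) :=
  stmt9_general n m γ hγ A B K P T Q R hP hPT hTγ hRic
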